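/- For every real t with 0 < t < 1, ∫₀ᵗ log(1−x²)/(1−x²) dx = (1/4)·log²(1+t) − (1/4)·log²(1−t) + log(√2) · log((1+t)/(1−t)) − (1/2)·( Li₂((1+t)/2) − Li₂((1−t)/2) ). -/

import Mathlib

/-! The right-hand side `F t = logOneSubSqDivAntideriv t` is an antiderivative of the integrand
on `(-1, 1)`: differentiating `Li₂` term by term gives `Li₂'(x) = -log (1 - x) / x`, and then
`F'` reduces to `(log (1 + x) + log (1 - x)) / ((1 + x) (1 - x))` once `log ((1 ± x) / 2)` is
split as `log (1 ± x) - log 2` and `log √2 = log 2 / 2`. Since `F 0 = 0`, the fundamental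
theorem of calculus concludes. -/

open Real MeasureTheory

/-- The real dilogarithm `Li₂(x) = ∑_{n=1}^∞ xⁿ/n²`. -/
noncomputable def Li2 (x : ℝ) : ℝ := ∑' n : ℕ, x ^ (n + 1) / (n + 1) ^ 2

theorem hasDerivAt_Li2_of_abs_lt_one {x : ℝ} (hx : |x| < 1) :
    HasDerivAt Li2 (∑' n : ℕ, x ^ n / (n + 1)) x := by
  obtain ⟨r, hxr, hr1⟩ := exists_between hx
  have hr0 : 0 ≤ r := (abs_nonneg x).trans hxr.le
  have hterm (n : ℕ) (y : ℝ) :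
      HasDerivAt (fun z : ℝ => z ^ (n + 1) / ((n : ℝ) + 1) ^ 2) (y ^ n / (n + 1)) y := by
    refine ((hasDerivAt_pow (n + 1) y).div_const (((n : ℝ) + 1) ^ 2)).congr_deriv ?_
    push_cast
    field_simp
  have hbound (n : ℕ) (y : ℝ) (hy : y ∈ Set.Ioo (-r) r) : ‖y ^ n / ((n : ℝ) + 1)‖ ≤ r ^ n := by
    have hyr : |y| ≤ r := abs_le.2 ⟨hy.1.le, hy.2.le⟩
    rw [norm_div, norm_pow, Real.norm_eq_abs, Real.norm_of_nonneg (by positivity)]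
    calc |y| ^ n / ((n : ℝ) + 1) ≤ |y| ^ n := div_le_self (by positivity) (by simp)
      _ ≤ r ^ n := pow_le_pow_left₀ (abs_nonneg y) hyr n
  exact hasDerivAt_tsum_of_isPreconnected (summable_geometric_of_lt_one hr0 hr1) isOpen_Ioo
    isPreconnected_Ioo (fun n y _ => hterm n y) hbound (y₀ := 0)
    ⟨by linarith [abs_nonneg x], by linarith [abs_nonneg x]⟩ (by simp) (abs_lt.1 hxr)

theorem hasDerivAt_Li2 {x : ℝ} (hx0 : x ≠ 0) (hx : |x| < 1) :
    HasDerivAt Li2 (-log (1 - x) / x) x := by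
  convert hasDerivAt_Li2_of_abs_lt_one hx using 1
  rw [← ((hasSum_pow_div_log_of_abs_lt_one hx).div_const x).tsum_eq]
  congr 1 with n
  field_simp
  ring

noncomputable def logOneSubSqDivAntideriv (t : ℝ) : ℝ :=
  (1 / 4) * log (1 + t) ^ 2 - (1 / 4) * log (1 - t) ^ 2 +
    log (sqrt 2) * log ((1 + t) / (1 - t)) - (1 / 2) * (Li2 ((1 + t) / 2) - Li2 ((1 - t) / 2))

theorem hasDerivAt_logOneSubSqDivAntideriv {x : ℝ} (hx : |x| < 1) :
    HasDerivAt logOneSubSqDivAntideriv (log (1 - x ^ 2) / (1 - x ^ 2)) x := by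
  obtain ⟨hx₁, hx₂⟩ := abs_lt.1 hx
  have hp : 0 < 1 + x := by linarith
  have hm : 0 < 1 - x := by linarith
  have hid_p : HasDerivAt (fun y : ℝ => 1 + y) 1 x := (hasDerivAt_id' x).const_add 1
  have hid_m : HasDerivAt (fun y : ℝ => 1 - y) (-1) x := (hasDerivAt_id' x).const_sub 1
  have hLi_p := (hasDerivAt_Li2 (x := (1 + x) / 2) (by positivity)
    (abs_lt.2 ⟨by linarith, by linarith⟩)).comp x (hid_p.div_const 2)
  have hLi_m := (hasDerivAt_Li2 (x := (1 - x) / 2) (by positivity)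
    (abs_lt.2 ⟨by linarith, by linarith⟩)).comp x (hid_m.div_const 2)
  refine (((((hid_p.log hp.ne').pow 2).const_mul (1 / 4)).sub
    (((hid_m.log hm.ne').pow 2).const_mul (1 / 4))).add
    (((hid_p.div hid_m hm.ne').log (div_pos hp hm).ne').const_mul (log (sqrt 2)))).sub
    ((hLi_p.sub hLi_m).const_mul (1 / 2)) |>.congr_deriv ?_
  rw [show 1 - (1 + x) / 2 = (1 - x) / 2 by ring, show 1 - (1 - x) / 2 = (1 + x) / 2 by ring,
    log_div hm.ne' two_ne_zero, log_div hp.ne' two_ne_zero, log_sqrt zero_le_two,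
    show 1 - x ^ 2 = (1 + x) * (1 - x) by ring, log_mul hp.ne' hm.ne']
  simp only [Pi.div_apply]
  field_simp
  ring

theorem integral_log_one_sub_sq_div_one_sub_sq {t : ℝ} (ht : |t| < 1) :
    ∫ x in (0 : ℝ)..t, log (1 - x ^ 2) / (1 - x ^ 2) = logOneSubSqDivAntideriv t := by
  have hsub : Set.uIcc 0 t ⊆ Set.Ioo (-1) 1 :=
    Set.ordConnected_Ioo.uIcc_subset (by norm_num) (abs_lt.1 ht)
  have hne (x : ℝ) (hx : x ∈ Set.Ioo (-1) 1) : 1 - x ^ 2 ≠ 0 := by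
    have : x ^ 2 < 1 := by nlinarith [hx.1, hx.2]
    linarith
  have hcont : ContinuousOn (fun x : ℝ => log (1 - x ^ 2) / (1 - x ^ 2)) (Set.Ioo (-1) 1) := by
    fun_prop (disch := assumption)
  rw [intervalIntegral.integral_eq_sub_of_hasDerivAt
    (fun x hx => hasDerivAt_logOneSubSqDivAntideriv (abs_lt.2 (hsub hx)))
    ((hcont.mono hsub).intervalIntegrable)]
  simp [logOneSubSqDivAntideriv]

theorem stmt11 (t : ℝ) (ht0 : 0 < t) (ht1 : t < 1) :
    ∫ x in (0 : ℝ)..t, Real.log (1 - x ^ 2) / (1 - x ^ 2) =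
      (1 / 4) * Real.log (1 + t) ^ 2 - (1 / 4) * Real.log (1 - t) ^ 2 +
        Real.log (Real.sqrt 2) * Real.log ((1 + t) / (1 - t)) -
        (1 / 2) * (Li2 ((1 + t) / 2) - Li2 ((1 - t) / 2)) :=
  integral_log_one_sub_sq_div_one_sub_sq (abs_lt.2 ⟨by linarith, ht1⟩)
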